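/- Under NTP-compatibility and NTP-separability (existence of W^p and W^d as in their definitions, with some S_j ⊊ {1,...,V}), for every B > 0 the constrained minimizer Ŵ_B = argmin_{‖W‖ ≤ B} CE(W) is unique and satisfies ‖Ŵ_B‖ = B. -/

import Mathlib

open Real Finset

noncomputable def softmaxFn {V : ℕ} (u : Fin V → ℝ) (v : Fin V) : ℝ :=
  Real.exp (u v) / ∑ v' : Fin V, Real.exp (u v')

/-- The NTP loss as a function of the decoder W (with fixed embeddings h). -/
noncomputable def ntpCE {V d m : ℕ} (h : Fin m → Fin d → ℝ) (pri : Fin m → ℝ)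
    (S : Fin m → Finset (Fin V)) (p : Fin m → Fin V → ℝ)
    (W : Fin V → Fin d → ℝ) : ℝ :=
  -∑ j, pri j * ∑ z ∈ S j, p j z *
    Real.log (softmaxFn (fun v => ∑ i, W v i * h j i) z)

/-- Frobenius norm of the decoder. -/
noncomputable def frobNorm {V d : ℕ} (W : Fin V → Fin d → ℝ) : ℝ :=
  Real.sqrt (∑ z, ∑ i, (W z i) ^ 2)

open scoped RealInnerProductSpace

section helpers
variable {V d m : ℕ} (h : Fin m → Fin d → ℝ) (pri : Fin m → ℝ)
  (S : Fin m → Finset (Fin V)) (p : Fin m → Fin V → ℝ)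

lemma ntpCE_eq (hV : 0 < V) (hpsum : ∀ j, ∑ z ∈ S j, p j z = 1)
    (W : Fin V → Fin d → ℝ) :
    ntpCE h pri S p W = ∑ j, pri j *
      (Real.log (∑ v, Real.exp (∑ i, W v i * h j i))
        - ∑ z ∈ S j, p j z * ∑ i, W z i * h j i) := by
  have : Nonempty (Fin V) := ⟨⟨0, hV⟩⟩
  unfold ntpCE softmaxFn
  rw [← Finset.sum_neg_distrib]
  refine Finset.sum_congr rfl fun j _ => ?_
  have hD : (0:ℝ) < ∑ v : Fin V, Real.exp (∑ i, W v i * h j i) :=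
    Finset.sum_pos (fun v _ => Real.exp_pos _) Finset.univ_nonempty
  have h1 : ∀ z ∈ S j, p j z * Real.log
      (Real.exp (∑ i, W z i * h j i) / ∑ v : Fin V, Real.exp (∑ i, W v i * h j i))
      = p j z * (∑ i, W z i * h j i)
        - p j z * Real.log (∑ v : Fin V, Real.exp (∑ i, W v i * h j i)) := by
    intro z _
    rw [Real.log_div (Real.exp_ne_zero _) hD.ne', Real.log_exp]
    ring
  rw [Finset.sum_congr rfl h1, Finset.sum_sub_distrib, ← Finset.sum_mul, hpsum j, one_mul]
  ring


lemma perj (hV : 0 < V) (Sj : Finset (Fin V)) (hSj : Sj.Nonempty)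
    (q : Fin V → ℝ) (hq : ∑ z ∈ Sj, q z = 1)
    (u a : Fin V → ℝ)
    (ha1 : ∀ z ∈ Sj, ∀ z' ∈ Sj, a z - a z' = 0)
    (ha2 : ∀ z ∈ Sj, ∀ v ∉ Sj, a z - a v ≥ 1)
    (t : ℝ) (ht : 0 < t) :
    (Real.log (∑ v, Real.exp (u v + t * a v)) - ∑ z ∈ Sj, q z * (u z + t * a z)
      ≤ Real.log (∑ v, Real.exp (u v)) - ∑ z ∈ Sj, q z * u z) ∧
    (Sj ≠ Finset.univ →
      Real.log (∑ v, Real.exp (u v + t * a v)) - ∑ z ∈ Sj, q z * (u z + t * a z)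
      < Real.log (∑ v, Real.exp (u v)) - ∑ z ∈ Sj, q z * u z) := by
  have : Nonempty (Fin V) := ⟨⟨0, hV⟩⟩
  obtain ⟨z0, hz0⟩ := hSj
  set c := a z0 with hc
  have hac : ∀ z ∈ Sj, a z = c := fun z hz => by
    have := ha1 z hz z0 hz0; linarith
  have hlin : ∑ z ∈ Sj, q z * (u z + t * a z) = (∑ z ∈ Sj, q z * u z) + t * c := by
    have : ∀ z ∈ Sj, q z * (u z + t * a z) = q z * u z + (t * c) * q z := by
      intro z hz; rw [hac z hz]; ring
    rw [Finset.sum_congr rfl this, Finset.sum_add_distrib, ← Finset.mul_sum, hq, mul_one]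
  have hexple : ∀ v : Fin V, Real.exp (u v + t * a v) ≤ Real.exp (t * c) * Real.exp (u v) := by
    intro v
    rw [← Real.exp_add]
    apply Real.exp_le_exp.2
    rcases em (v ∈ Sj) with hv | hv
    · rw [hac v hv]; ring_nf; exact le_refl _
    · have := ha2 z0 hz0 v hv
      nlinarith
  have hpos1 : (0:ℝ) < ∑ v, Real.exp (u v + t * a v) :=
    Finset.sum_pos (fun v _ => Real.exp_pos _) Finset.univ_nonempty
  have hpos2 : (0:ℝ) < ∑ v, Real.exp (u v) :=
    Finset.sum_pos (fun v _ => Real.exp_pos _) Finset.univ_nonempty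
  have hsumle : ∑ v, Real.exp (u v + t * a v) ≤ Real.exp (t * c) * ∑ v, Real.exp (u v) := by
    rw [Finset.mul_sum]; exact Finset.sum_le_sum fun v _ => hexple v
  have hlogle : Real.log (∑ v, Real.exp (u v + t * a v))
      ≤ t * c + Real.log (∑ v, Real.exp (u v)) := by
    calc Real.log (∑ v, Real.exp (u v + t * a v))
        ≤ Real.log (Real.exp (t * c) * ∑ v, Real.exp (u v)) :=
          Real.log_le_log hpos1 hsumle
      _ = t * c + Real.log (∑ v, Real.exp (u v)) := by
          rw [Real.log_mul (Real.exp_ne_zero _) hpos2.ne', Real.log_exp]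
  constructor
  · rw [hlin]; linarith
  · intro hne
    obtain ⟨v0, hv0⟩ : ∃ v, v ∉ Sj := by
      by_contra hcon
      push_neg at hcon
      exact hne (Finset.eq_univ_iff_forall.2 hcon)
    have hstrict : ∑ v, Real.exp (u v + t * a v) < Real.exp (t * c) * ∑ v, Real.exp (u v) := by
      rw [Finset.mul_sum]
      refine Finset.sum_lt_sum (fun v _ => hexple v) ⟨v0, Finset.mem_univ _, ?_⟩
      rw [← Real.exp_add]
      apply Real.exp_lt_exp.2
      have := ha2 z0 hz0 v0 hv0
      nlinarith
    have hloglt : Real.log (∑ v, Real.exp (u v + t * a v))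
        < t * c + Real.log (∑ v, Real.exp (u v)) := by
      calc Real.log (∑ v, Real.exp (u v + t * a v))
          < Real.log (Real.exp (t * c) * ∑ v, Real.exp (u v)) :=
            Real.log_lt_log hpos1 hstrict
        _ = t * c + Real.log (∑ v, Real.exp (u v)) := by
            rw [Real.log_mul (Real.exp_ne_zero _) hpos2.ne', Real.log_exp]
    rw [hlin]; linarith

lemma ce_decrease (hV : 0 < V) (hpri : ∀ j, 0 < pri j) (hS : ∀ j, (S j).Nonempty)
    (hpsum : ∀ j, ∑ z ∈ S j, p j z = 1)
    (Wd : Fin V → Fin d → ℝ)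
    (hWd1 : ∀ j, ∀ z ∈ S j, ∀ z' ∈ S j,
        (∑ i, Wd z i * h j i) - (∑ i, Wd z' i * h j i) = 0)
    (hWd2 : ∀ j, ∀ z ∈ S j, ∀ v ∉ S j,
        (∑ i, Wd z i * h j i) - (∑ i, Wd v i * h j i) ≥ 1)
    (j0 : Fin m) (hj0 : S j0 ≠ Finset.univ)
    (W : Fin V → Fin d → ℝ) (t : ℝ) (ht : 0 < t) :
    ntpCE h pri S p (fun v i => W v i + t * Wd v i) < ntpCE h pri S p W := by
  rw [ntpCE_eq h pri S p hV hpsum, ntpCE_eq h pri S p hV hpsum]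
  have hlogit : ∀ j v, (∑ i, (W v i + t * Wd v i) * h j i)
      = (∑ i, W v i * h j i) + t * (∑ i, Wd v i * h j i) := by
    intro j v
    rw [Finset.mul_sum, ← Finset.sum_add_distrib]
    refine Finset.sum_congr rfl fun i _ => by ring
  have hperj : ∀ j : Fin m,
      (Real.log (∑ v, Real.exp ((∑ i, W v i * h j i) + t * ∑ i, Wd v i * h j i))
        - ∑ z ∈ S j, p j z * ((∑ i, W z i * h j i) + t * ∑ i, Wd z i * h j i)
        ≤ Real.log (∑ v, Real.exp (∑ i, W v i * h j i))
          - ∑ z ∈ S j, p j z * ∑ i, W z i * h j i) ∧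
      (S j ≠ Finset.univ →
        Real.log (∑ v, Real.exp ((∑ i, W v i * h j i) + t * ∑ i, Wd v i * h j i))
        - ∑ z ∈ S j, p j z * ((∑ i, W z i * h j i) + t * ∑ i, Wd z i * h j i)
        < Real.log (∑ v, Real.exp (∑ i, W v i * h j i))
          - ∑ z ∈ S j, p j z * ∑ i, W z i * h j i) := fun j =>
    perj hV (S j) (hS j) (p j) (hpsum j) (fun v => ∑ i, W v i * h j i)
      (fun v => ∑ i, Wd v i * h j i) (hWd1 j) (hWd2 j) t ht
  simp only [hlogit]
  refine Finset.sum_lt_sum (fun j _ => ?_) ⟨j0, Finset.mem_univ _, ?_⟩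
  · exact mul_le_mul_of_nonneg_left (hperj j).1 (hpri j).le
  · exact mul_lt_mul_of_pos_left ((hperj j0).2 hj0) (hpri j0)

lemma lse_midpoint (hV : 0 < V) (u1 u2 : Fin V → ℝ) :
    Real.log (∑ v, Real.exp ((u1 v + u2 v) / 2))
      ≤ (Real.log (∑ v, Real.exp (u1 v)) + Real.log (∑ v, Real.exp (u2 v))) / 2 := by
  have : Nonempty (Fin V) := ⟨⟨0, hV⟩⟩
  have hA : (0:ℝ) < ∑ v, Real.exp (u1 v) :=
    Finset.sum_pos (fun v _ => Real.exp_pos _) Finset.univ_nonempty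
  have hB : (0:ℝ) < ∑ v, Real.exp (u2 v) :=
    Finset.sum_pos (fun v _ => Real.exp_pos _) Finset.univ_nonempty
  have hCS : ∑ v, Real.exp ((u1 v + u2 v) / 2)
      ≤ Real.sqrt (∑ v, Real.exp (u1 v)) * Real.sqrt (∑ v, Real.exp (u2 v)) := by
    have h1 : ∀ v : Fin V, Real.exp ((u1 v + u2 v) / 2)
        = Real.exp (u1 v / 2) * Real.exp (u2 v / 2) := by
      intro v; rw [← Real.exp_add]; ring_nf
    have h2 : ∀ v : Fin V, Real.exp (u1 v / 2) ^ 2 = Real.exp (u1 v) := by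
      intro v; rw [sq, ← Real.exp_add]; ring_nf
    have h3 : ∀ v : Fin V, Real.exp (u2 v / 2) ^ 2 = Real.exp (u2 v) := by
      intro v; rw [sq, ← Real.exp_add]; ring_nf
    calc ∑ v, Real.exp ((u1 v + u2 v) / 2)
        = ∑ v, Real.exp (u1 v / 2) * Real.exp (u2 v / 2) :=
          Finset.sum_congr rfl fun v _ => h1 v
      _ ≤ Real.sqrt (∑ v, Real.exp (u1 v / 2) ^ 2) * Real.sqrt (∑ v, Real.exp (u2 v / 2) ^ 2) :=
          Real.sum_mul_le_sqrt_mul_sqrt _ _ _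
      _ = Real.sqrt (∑ v, Real.exp (u1 v)) * Real.sqrt (∑ v, Real.exp (u2 v)) := by
          rw [Finset.sum_congr rfl fun v _ => h2 v, Finset.sum_congr rfl fun v _ => h3 v]
  have hmidpos : (0:ℝ) < ∑ v, Real.exp ((u1 v + u2 v) / 2) :=
    Finset.sum_pos (fun v _ => Real.exp_pos _) Finset.univ_nonempty
  calc Real.log (∑ v, Real.exp ((u1 v + u2 v) / 2))
      ≤ Real.log (Real.sqrt (∑ v, Real.exp (u1 v)) * Real.sqrt (∑ v, Real.exp (u2 v))) :=
        Real.log_le_log hmidpos hCS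
    _ = (Real.log (∑ v, Real.exp (u1 v)) + Real.log (∑ v, Real.exp (u2 v))) / 2 := by
        rw [Real.log_mul (Real.sqrt_pos.2 hA).ne' (Real.sqrt_pos.2 hB).ne',
          Real.log_sqrt hA.le, Real.log_sqrt hB.le]
        ring

lemma ce_midpoint (hV : 0 < V) (hpri : ∀ j, 0 < pri j)
    (hpsum : ∀ j, ∑ z ∈ S j, p j z = 1) (W1 W2 : Fin V → Fin d → ℝ) :
    ntpCE h pri S p (fun v i => (W1 v i + W2 v i) / 2)
      ≤ (ntpCE h pri S p W1 + ntpCE h pri S p W2) / 2 := by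
  rw [ntpCE_eq h pri S p hV hpsum, ntpCE_eq h pri S p hV hpsum,
    ntpCE_eq h pri S p hV hpsum]
  have hlogit : ∀ j v, (∑ i, ((W1 v i + W2 v i) / 2) * h j i)
      = ((∑ i, W1 v i * h j i) + (∑ i, W2 v i * h j i)) / 2 := by
    intro j v
    rw [← Finset.sum_add_distrib, Finset.sum_div]
    exact Finset.sum_congr rfl fun i _ => by ring
  simp only [hlogit]
  calc ∑ j, pri j * (Real.log (∑ v, Real.exp (((∑ i, W1 v i * h j i)
          + ∑ i, W2 v i * h j i) / 2))
        - ∑ z ∈ S j, p j z * (((∑ i, W1 z i * h j i) + ∑ i, W2 z i * h j i) / 2))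
      ≤ ∑ j, pri j * (((Real.log (∑ v, Real.exp (∑ i, W1 v i * h j i))
          - ∑ z ∈ S j, p j z * ∑ i, W1 z i * h j i)
        + (Real.log (∑ v, Real.exp (∑ i, W2 v i * h j i))
          - ∑ z ∈ S j, p j z * ∑ i, W2 z i * h j i)) / 2) := by
        refine Finset.sum_le_sum fun j _ => mul_le_mul_of_nonneg_left ?_ (hpri j).le
        have hlse := lse_midpoint hV (fun v => ∑ i, W1 v i * h j i)
          (fun v => ∑ i, W2 v i * h j i)
        have hlin : ∑ z ∈ S j, p j z * (((∑ i, W1 z i * h j i)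
            + ∑ i, W2 z i * h j i) / 2)
            = ((∑ z ∈ S j, p j z * ∑ i, W1 z i * h j i)
              + ∑ z ∈ S j, p j z * ∑ i, W2 z i * h j i) / 2 := by
          rw [← Finset.sum_add_distrib, Finset.sum_div]
          exact Finset.sum_congr rfl fun z _ => by ring
        rw [hlin]
        linarith
    _ = ((∑ j, pri j * (Real.log (∑ v, Real.exp (∑ i, W1 v i * h j i))
          - ∑ z ∈ S j, p j z * ∑ i, W1 z i * h j i))
        + ∑ j, pri j * (Real.log (∑ v, Real.exp (∑ i, W2 v i * h j i))
          - ∑ z ∈ S j, p j z * ∑ i, W2 z i * h j i)) / 2 := by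
        rw [← Finset.sum_add_distrib, Finset.sum_div]
        exact Finset.sum_congr rfl fun j _ => by ring

lemma ce_continuous (hV : 0 < V) : Continuous (ntpCE h pri S p) := by
  have : Nonempty (Fin V) := ⟨⟨0, hV⟩⟩
  unfold ntpCE softmaxFn
  apply Continuous.neg
  refine continuous_finset_sum _ fun j _ => Continuous.mul continuous_const ?_
  refine continuous_finset_sum _ fun z _ => Continuous.mul continuous_const ?_
  have hu : ∀ v : Fin V, Continuous (fun W : Fin V → Fin d → ℝ => ∑ i, W v i * h j i) :=
    fun v => continuous_finset_sum _ fun i _ =>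
      (continuous_apply_apply v i).mul continuous_const
  have hden : Continuous (fun W : Fin V → Fin d → ℝ =>
      ∑ v' : Fin V, Real.exp (∑ i, W v' i * h j i)) :=
    continuous_finset_sum _ fun v _ => Real.continuous_exp.comp (hu v)
  have hdpos : ∀ W : Fin V → Fin d → ℝ,
      (0:ℝ) < ∑ v' : Fin V, Real.exp (∑ i, W v' i * h j i) :=
    fun W => Finset.sum_pos (fun v _ => Real.exp_pos _) Finset.univ_nonempty
  refine Continuous.log ?_ ?_
  · exact (Real.continuous_exp.comp (hu z)).div hden fun W => (hdpos W).ne'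
  · intro W
    exact div_ne_zero (Real.exp_ne_zero _) (hdpos W).ne'

noncomputable def toE {V d : ℕ} (W : Fin V → Fin d → ℝ) :
    EuclideanSpace ℝ (Fin V × Fin d) :=
  (WithLp.equiv 2 _).symm (fun q => W q.1 q.2)

lemma frobNorm_eq (W : Fin V → Fin d → ℝ) : frobNorm W = ‖toE W‖ := by
  rw [EuclideanSpace.norm_eq]
  unfold frobNorm
  rw [Fintype.sum_prod_type]
  simp [toE, sq_abs]

lemma toE_addsmul (W U : Fin V → Fin d → ℝ) (t : ℝ) :
    toE (fun v i => W v i + t * U v i) = toE W + t • toE U := rfl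

lemma toE_mid (W1 W2 : Fin V → Fin d → ℝ) :
    toE (fun v i => (W1 v i + W2 v i) / 2) = (2:ℝ)⁻¹ • (toE W1 + toE W2) := by
  ext q
  show (W1 q.1 q.2 + W2 q.1 q.2) / 2 = (2:ℝ)⁻¹ * (W1 q.1 q.2 + W2 q.1 q.2)
  ring

lemma frob_nonneg (W : Fin V → Fin d → ℝ) : 0 ≤ frobNorm W := Real.sqrt_nonneg _

lemma frob_add_le (W U : Fin V → Fin d → ℝ) (t : ℝ) (ht : 0 ≤ t) :
    frobNorm (fun v i => W v i + t * U v i) ≤ frobNorm W + t * frobNorm U := by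
  rw [frobNorm_eq, frobNorm_eq, frobNorm_eq, toE_addsmul]
  calc ‖toE W + t • toE U‖ ≤ ‖toE W‖ + ‖t • toE U‖ := norm_add_le _ _
    _ = ‖toE W‖ + t * ‖toE U‖ := by rw [norm_smul, Real.norm_eq_abs, abs_of_nonneg ht]

lemma frob_mid_lt {B : ℝ} (hB : 0 < B) (W1 W2 : Fin V → Fin d → ℝ)
    (h1 : frobNorm W1 = B) (h2 : frobNorm W2 = B) (hne : W1 ≠ W2) :
    frobNorm (fun v i => (W1 v i + W2 v i) / 2) < B := by
  rw [frobNorm_eq, toE_mid]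
  rw [frobNorm_eq] at h1 h2
  set x := toE W1
  set y := toE W2
  have hxy : x ≠ y := by
    intro hcon
    apply hne
    funext v i
    have := congrFun (congrArg (WithLp.equiv 2 _) hcon) (v, i)
    exact this
  have hinner : (inner ℝ x y : ℝ) < B * B := by
    rcases lt_or_eq_of_le (real_inner_le_norm x y) with hlt | heq
    · rw [h1, h2] at hlt; exact hlt
    · exfalso
      have := inner_eq_norm_mul_iff_real.1 heq
      rw [h1, h2] at this
      exact hxy (smul_right_injective _ hB.ne' this)
  have hsq : ‖x + y‖ ^ 2 < (2 * B) ^ 2 := by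
    rw [← real_inner_self_eq_norm_sq]
    rw [inner_add_add_self]
    have hx2 : (inner ℝ x x : ℝ) = B * B := by
      rw [real_inner_self_eq_norm_sq, h1]; ring
    have hy2 : (inner ℝ y y : ℝ) = B * B := by
      rw [real_inner_self_eq_norm_sq, h2]; ring
    have hcomm : (inner ℝ y x : ℝ) = inner ℝ x y := real_inner_comm x y
    rw [hx2, hy2, hcomm]; nlinarith
  have hlt : ‖x + y‖ < 2 * B :=
    lt_of_pow_lt_pow_left₀ 2 (by positivity) hsq
  rw [norm_smul]
  rw [Real.norm_eq_abs]
  rw [abs_of_nonneg (by norm_num : (0:ℝ) ≤ (2:ℝ)⁻¹)]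
  linarith

lemma frob_entry_le (W : Fin V → Fin d → ℝ) (v : Fin V) (i : Fin d) :
    |W v i| ≤ frobNorm W := by
  unfold frobNorm
  rw [← Real.sqrt_sq_eq_abs]
  apply Real.sqrt_le_sqrt
  calc (W v i) ^ 2 ≤ ∑ i', (W v i') ^ 2 :=
        Finset.single_le_sum (f := fun i' => (W v i') ^ 2) (fun _ _ => sq_nonneg _) (Finset.mem_univ i)
    _ ≤ ∑ z, ∑ i', (W z i') ^ 2 :=
        Finset.single_le_sum (f := fun z => ∑ i', (W z i') ^ 2) (fun z _ => Finset.sum_nonneg fun _ _ => sq_nonneg _)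
          (Finset.mem_univ v)

lemma frob_continuous : Continuous (fun W : Fin V → Fin d → ℝ => frobNorm W) := by
  unfold frobNorm
  apply Continuous.sqrt
  refine continuous_finset_sum _ fun z _ => continuous_finset_sum _ fun i _ => ?_
  exact ((continuous_apply i).comp (continuous_apply z)).pow 2

lemma frob_compact_ball {B : ℝ} (hB : 0 < B) :
    IsCompact {W : Fin V → Fin d → ℝ | frobNorm W ≤ B} := by
  have hclosed : IsClosed {W : Fin V → Fin d → ℝ | frobNorm W ≤ B} :=
    isClosed_le frob_continuous continuous_const
  refine (isCompact_closedBall (0 : Fin V → Fin d → ℝ) B).of_isClosed_subset hclosed ?_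
  intro W hW
  rw [Metric.mem_closedBall, dist_zero_right]
  rw [pi_norm_le_iff_of_nonneg hB.le]
  intro v
  rw [pi_norm_le_iff_of_nonneg hB.le]
  intro i
  rw [Real.norm_eq_abs]
  exact (frob_entry_le W v i).trans hW

end helpers

/-- Under NTP-compatibility and NTP-separability, for every B > 0 the minimizer of
CE over the ball of radius B is unique and lies on the boundary of the ball. -/
theorem stmt_12 {V d m : ℕ}
    (h : Fin m → Fin d → ℝ) (pri : Fin m → ℝ) (hpri : ∀ j, 0 < pri j)
    (hprisum : ∑ j, pri j = 1)
    (S : Fin m → Finset (Fin V)) (hS : ∀ j, (S j).Nonempty)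
    (hproper : ∃ j, S j ≠ Finset.univ)
    (p : Fin m → Fin V → ℝ)
    (hp : ∀ j, ∀ z ∈ S j, 0 < p j z) (hp0 : ∀ j, ∀ v ∉ S j, p j v = 0)
    (hpsum : ∀ j, ∑ z ∈ S j, p j z = 1)
    (hcompat : ∃ Wp : Fin V → Fin d → ℝ, ∀ j, ∀ z ∈ S j, ∀ z' ∈ S j,
      (∑ i, Wp z i * h j i) - (∑ i, Wp z' i * h j i) = Real.log (p j z / p j z'))
    (hsep : ∃ Wd : Fin V → Fin d → ℝ,
      (∀ j, ∀ z ∈ S j, ∀ z' ∈ S j,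
        (∑ i, Wd z i * h j i) - (∑ i, Wd z' i * h j i) = 0) ∧
      (∀ j, ∀ z ∈ S j, ∀ v ∉ S j,
        (∑ i, Wd z i * h j i) - (∑ i, Wd v i * h j i) ≥ 1)) :
    ∀ B : ℝ, 0 < B →
      (∃! W : Fin V → Fin d → ℝ,
        frobNorm W ≤ B ∧
        ∀ W', frobNorm W' ≤ B → ntpCE h pri S p W ≤ ntpCE h pri S p W') ∧
      (∀ W : Fin V → Fin d → ℝ,
        (frobNorm W ≤ B ∧
          ∀ W', frobNorm W' ≤ B → ntpCE h pri S p W ≤ ntpCE h pri S p W') →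
        frobNorm W = B) := by

  intro B hB
  obtain ⟨j0, hj0⟩ := hproper
  obtain ⟨z0, hz0⟩ := hS j0
  have hV : 0 < V := z0.pos
  obtain ⟨Wd, hWd1, hWd2⟩ := hsep
  have claimA : ∀ W : Fin V → Fin d → ℝ, frobNorm W ≤ B →
      (∀ W', frobNorm W' ≤ B → ntpCE h pri S p W ≤ ntpCE h pri S p W') →
      frobNorm W = B := by
    intro W hWB hmin
    by_contra hne
    have hlt : frobNorm W < B := lt_of_le_of_ne hWB hne
    have hWdpos : (0:ℝ) < frobNorm Wd + 1 := by
      have := frob_nonneg Wd; linarith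
    set t := (B - frobNorm W) / (frobNorm Wd + 1) with htdef
    have ht : 0 < t := div_pos (by linarith) hWdpos
    have hdec := ce_decrease h pri S p hV hpri hS hpsum Wd hWd1 hWd2 j0 hj0 W t ht
    have hnorm : frobNorm (fun v i => W v i + t * Wd v i) ≤ B := by
      calc frobNorm (fun v i => W v i + t * Wd v i)
          ≤ frobNorm W + t * frobNorm Wd := frob_add_le W Wd t ht.le
        _ ≤ frobNorm W + t * (frobNorm Wd + 1) := by nlinarith
        _ = frobNorm W + (B - frobNorm W) := by
            rw [htdef, div_mul_cancel₀ _ hWdpos.ne']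
        _ = B := by ring
    exact absurd (hmin _ hnorm) (not_le.2 hdec)
  obtain ⟨W₀, hW₀mem, hW₀min⟩ := (frob_compact_ball hB).exists_isMinOn
    ⟨(fun _ _ => 0), by simp [Set.mem_setOf_eq, frobNorm, hB.le]⟩
    ((ce_continuous h pri S p hV).continuousOn)
  have hW₀mem' : frobNorm W₀ ≤ B := hW₀mem
  have hW₀min' : ∀ W', frobNorm W' ≤ B → ntpCE h pri S p W₀ ≤ ntpCE h pri S p W' :=
    fun W' hW' => isMinOn_iff.1 hW₀min W' hW'
  refine ⟨⟨W₀, ⟨hW₀mem', hW₀min'⟩, ?_⟩, fun W hW => claimA W hW.1 hW.2⟩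
  rintro W ⟨hWB, hWmin⟩
  by_contra hne
  have hBW : frobNorm W = B := claimA W hWB hWmin
  have hBW0 : frobNorm W₀ = B := claimA W₀ hW₀mem' hW₀min'
  have hval : ntpCE h pri S p W = ntpCE h pri S p W₀ :=
    le_antisymm (hWmin W₀ hW₀mem') (hW₀min' W hWB)
  have hmid : ntpCE h pri S p (fun v i => (W v i + W₀ v i) / 2) ≤ ntpCE h pri S p W := by
    have := ce_midpoint h pri S p hV hpri hpsum W W₀
    linarith
  have hmidnorm : frobNorm (fun v i => (W v i + W₀ v i) / 2) < B :=
    frob_mid_lt hB W W₀ hBW hBW0 hne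
  have hfin : frobNorm (fun v i => (W v i + W₀ v i) / 2) = B :=
    claimA _ hmidnorm.le (fun W' hW' => le_trans hmid (hWmin W' hW'))
  exact absurd hfin (ne_of_lt hmidnorm)
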